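/- arXiv:0807.0427 — 7 statements merged into one kernel-verified Lean document; each statement's English description precedes it below -/
import Mathlib

section
/- For every integer N ≥ 3, the half sequence (λ_k)_{1 ≤ k ≤ ⌊N/2⌋}, where λ_k = -(1/4) ∑_{j=1}^{N-1} (1 - cos(2πjk/N)) / sin^3(πj/N), is negative and strictly decreasing in k. -/
/-!
Put `θ = (2k+1)π/N`. The product-to-sum formula turns `λ_k - λ_{k+1}` into `∑ⱼ wⱼ sin (jθ)` with
`wⱼ = 1/(4 sin² (πj/N))`. Splitting off the smallest weight `w_{⌊N/2⌋}` leaves a positive multiple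
of `∑ⱼ sin (jθ) = cot (θ/2) > 0`, plus a sum whose weights are symmetric under `j ↦ N - j`, vanish
at `⌊N/2⌋`, and are convex (convexity of `csc²`) and nonincreasing on `1, …, ⌊N/2⌋`. After folding
that sum in half, two summations by parts reduce its nonnegativity to Fejér's positivity of the
Cesàro means of `∑ sin (jθ)` for `0 < θ < π`.
-/

open Finset Real

theorem sum_Icc_mul_by_parts {R : Type*} [CommRing R] (a b : ℕ → R) (n : ℕ) :
    ∑ j ∈ Icc 1 (n + 1), a j * b j =
      ∑ j ∈ Icc 1 n, (a j - a (j + 1)) * ∑ i ∈ Icc 1 j, b i +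
        a (n + 1) * ∑ i ∈ Icc 1 (n + 1), b i := by
  induction n with
  | zero => simp
  | succ n ih =>
    rw [sum_Icc_succ_top (by omega), ih,
      sum_Icc_succ_top (by omega) fun j => (a j - a (j + 1)) * ∑ i ∈ Icc 1 j, b i,
      sum_Icc_succ_top (by omega : 1 ≤ n + 2) b]
    ring

theorem sum_Icc_mul_nonneg_of_antitone {a b : ℕ → ℝ} {n : ℕ}
    (ha_anti : ∀ j, 1 ≤ j → j < n → a (j + 1) ≤ a j)
    (ha_nonneg : ∀ j, 1 ≤ j → j ≤ n → 0 ≤ a j)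
    (hb : ∀ j ≤ n, 0 ≤ ∑ i ∈ Icc 1 j, b i) :
    0 ≤ ∑ j ∈ Icc 1 n, a j * b j := by
  rcases n with _ | n
  · simp
  rw [sum_Icc_mul_by_parts]
  refine add_nonneg (sum_nonneg fun j hj => ?_)
    (mul_nonneg (ha_nonneg _ le_add_self le_rfl) (hb _ le_rfl))
  rw [mem_Icc] at hj
  exact mul_nonneg (sub_nonneg.2 (ha_anti j hj.1 (by omega))) (hb j (by omega))

theorem abs_sin_nat_mul_le (n : ℕ) (x : ℝ) : |sin (n * x)| ≤ n * |sin x| := by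
  induction n with
  | zero => simp
  | succ n ih =>
    calc |sin ((n + 1 : ℕ) * x)| = |sin (n * x) * cos x + cos (n * x) * sin x| := by
          push_cast; rw [add_mul, one_mul, sin_add]
      _ ≤ |sin (n * x)| * |cos x| + |cos (n * x)| * |sin x| := by
          rw [← abs_mul, ← abs_mul]; exact abs_add_le _ _
      _ ≤ |sin (n * x)| + |sin x| := by
          gcongr
          · exact mul_le_of_le_one_right (abs_nonneg _) (abs_cos_le_one x)
          · exact mul_le_of_le_one_left (abs_nonneg _) (abs_cos_le_one _)
      _ ≤ (n + 1 : ℕ) * |sin x| := by push_cast; linarith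

theorem two_mul_sin_half_mul_sum_Icc_sin (θ : ℝ) (n : ℕ) :
    2 * sin (θ / 2) * ∑ i ∈ Icc 1 n, sin (i * θ) = cos (θ / 2) - cos ((n + 1 / 2) * θ) := by
  induction n with
  | zero => simp [div_eq_inv_mul]
  | succ n ih =>
    have h := two_mul_sin_mul_sin ((n + 1) * θ) (θ / 2)
    rw [show (n + 1) * θ - θ / 2 = (n + 1 / 2) * θ by ring,
      show (n + 1) * θ + θ / 2 = (n + 1 + 1 / 2) * θ by ring] at h
    rw [sum_Icc_succ_top (by omega), mul_add, ih]
    push_cast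
    linear_combination h

theorem four_mul_sin_half_sq_mul_sum_Icc_sum_Icc_sin (θ : ℝ) (n : ℕ) :
    4 * sin (θ / 2) ^ 2 * ∑ m ∈ Icc 1 n, ∑ i ∈ Icc 1 m, sin (i * θ) =
      (n + 1) * sin θ - sin ((n + 1) * θ) := by
  induction n with
  | zero => simp
  | succ n ih =>
    have hsum := two_mul_sin_half_mul_sum_Icc_sin θ (n + 1)
    have hprod := two_mul_sin_mul_cos (θ / 2) ((n + 1 + 1 / 2) * θ)
    rw [show θ / 2 - (n + 1 + 1 / 2) * θ = -((n + 1) * θ) by ring,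
      show θ / 2 + (n + 1 + 1 / 2) * θ = (n + 1 + 1) * θ by ring, sin_neg] at hprod
    have hdouble := sin_two_mul (θ / 2)
    rw [show 2 * (θ / 2) = θ by ring] at hdouble
    rw [sum_Icc_succ_top (by omega), mul_add, ih]
    push_cast at hsum ⊢
    linear_combination 2 * sin (θ / 2) * hsum - hprod - hdouble

theorem sum_Icc_sum_Icc_sin_nonneg {θ : ℝ} (hθ₀ : 0 < θ) (hθπ : θ < π) (n : ℕ) :
    0 ≤ ∑ m ∈ Icc 1 n, ∑ i ∈ Icc 1 m, sin (i * θ) := by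
  have hhalf : 0 < sin (θ / 2) := sin_pos_of_pos_of_lt_pi (by linarith) (by linarith)
  have hbound := (le_abs_self _).trans (abs_sin_nat_mul_le (n + 1) θ)
  rw [abs_of_nonneg (sin_nonneg_of_nonneg_of_le_pi hθ₀.le hθπ.le)] at hbound
  push_cast at hbound
  refine nonneg_of_mul_nonneg_right ?_ (by positivity : 0 < 4 * sin (θ / 2) ^ 2)
  rw [four_mul_sin_half_sq_mul_sum_Icc_sum_Icc_sin]
  linarith

theorem mul_sum_Icc_sin_le_sum_Icc_mul_sin {a : ℕ → ℝ} {n : ℕ} {θ : ℝ} (hθ₀ : 0 < θ) (hθπ : θ < π)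
    (ha_conv : ∀ j, 1 ≤ j → j + 2 ≤ n → 2 * a (j + 1) ≤ a j + a (j + 2))
    (ha_anti : ∀ j, 1 ≤ j → j < n → a (j + 1) ≤ a j) :
    a n * ∑ j ∈ Icc 1 n, sin (j * θ) ≤ ∑ j ∈ Icc 1 n, a j * sin (j * θ) := by
  rcases n with _ | n
  · simp
  rw [sum_Icc_mul_by_parts, le_add_iff_nonneg_left]
  refine sum_Icc_mul_nonneg_of_antitone (fun j hj hjn => ?_) (fun j hj hjn => ?_)
    (fun j _ => sum_Icc_sum_Icc_sin_nonneg hθ₀ hθπ j)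
  · linarith [ha_conv j hj (by omega)]
  · linarith [ha_anti j hj (by omega)]

theorem sum_Icc_eq_two_mul_sum_Icc_half (g : ℕ → ℝ) (N : ℕ)
    (hg_symm : ∀ j ∈ Icc 1 (N - 1), g (N - j) = g j) (hg_half : g (N / 2) = 0) :
    ∑ j ∈ Icc 1 (N - 1), g j = 2 * ∑ j ∈ Icc 1 (N / 2), g j := by
  have hupper : ∑ j ∈ Ioc (N / 2) (N - 1), g j = ∑ j ∈ Icc 1 ((N - 1) / 2), g j := by
    refine sum_nbij' (N - ·) (N - ·) ?_ ?_ ?_ ?_ ?_ <;> intro j hj <;>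
      simp only [mem_Ioc, mem_Icc] at hj ⊢
    · omega
    · omega
    · omega
    · omega
    · exact (hg_symm j (mem_Icc.2 (by omega))).symm
  have hlower : ∑ j ∈ Icc 1 ((N - 1) / 2), g j = ∑ j ∈ Icc 1 (N / 2), g j := by
    rcases Nat.even_or_odd' N with ⟨h, rfl | rfl⟩
    · rcases h with _ | h
      · simp
      rw [show 2 * (h + 1) / 2 = h + 1 by omega] at hg_half ⊢
      rw [show (2 * (h + 1) - 1) / 2 = h by omega, sum_Icc_succ_top (by omega), hg_half, add_zero]
    · rw [show (2 * h + 1 - 1) / 2 = (2 * h + 1) / 2 by omega]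
  have hIcc (n : ℕ) : Icc 1 n = Ioc 0 n := Icc_add_one_left_eq_Ioc 0 n
  calc ∑ j ∈ Icc 1 (N - 1), g j = ∑ j ∈ Icc 1 (N / 2), g j + ∑ j ∈ Ioc (N / 2) (N - 1), g j := by
        rw [hIcc, hIcc, sum_Ioc_consecutive g (Nat.zero_le _) (by omega)]
    _ = 2 * ∑ j ∈ Icc 1 (N / 2), g j := by rw [hupper, hlower, two_mul]

theorem two_mul_inv_sin_sq_midpoint_le {a b : ℝ} (ha : 0 < sin a) (hb : 0 < sin b) :
    2 * (sin ((a + b) / 2) ^ 2)⁻¹ ≤ (sin a ^ 2)⁻¹ + (sin b ^ 2)⁻¹ := by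
  have hmid : sin a * sin b ≤ sin ((a + b) / 2) ^ 2 := by
    have hprod := two_mul_sin_mul_sin a b
    have hsq := cos_sq ((a + b) / 2)
    rw [show 2 * ((a + b) / 2) = a + b by ring] at hsq
    nlinarith [cos_le_one (a - b), sin_sq_add_cos_sq ((a + b) / 2)]
  calc 2 * (sin ((a + b) / 2) ^ 2)⁻¹ ≤ 2 * (sin a * sin b)⁻¹ := by gcongr
    _ = (sin a ^ 2)⁻¹ + (sin b ^ 2)⁻¹ - ((sin a)⁻¹ - (sin b)⁻¹) ^ 2 := by field_simp; ring
    _ ≤ (sin a ^ 2)⁻¹ + (sin b ^ 2)⁻¹ := sub_le_self _ (sq_nonneg _)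

theorem sin_pi_mul_div_pos {N j : ℕ} (hj : 0 < j) (hjN : j < N) : 0 < sin (π * j / N) := by
  have hjN' : (j : ℝ) < N := by exact_mod_cast hjN
  have hj' : (0 : ℝ) < j := by exact_mod_cast hj
  apply sin_pos_of_pos_of_lt_pi (div_pos (mul_pos pi_pos hj') (hj'.trans hjN'))
  rw [div_lt_iff₀ (hj'.trans hjN')]
  nlinarith [pi_pos]

noncomputable def ngonWeight (N j : ℕ) : ℝ := (4 * sin (π * j / N) ^ 2)⁻¹

theorem ngonWeight_pos {N j : ℕ} (hj : 0 < j) (hjN : j < N) : 0 < ngonWeight N j := by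
  have := sin_pi_mul_div_pos hj hjN
  unfold ngonWeight; positivity

theorem ngonWeight_sub {N j : ℕ} (hj : j ≤ N) : ngonWeight N (N - j) = ngonWeight N j := by
  rcases Nat.eq_zero_or_pos N with rfl | hN
  · simp [ngonWeight]
  have hN' : (N : ℝ) ≠ 0 := by positivity
  rw [ngonWeight, ngonWeight, Nat.cast_sub hj,
    show π * (N - j) / N = π - π * j / N by field_simp, sin_pi_sub]

theorem ngonWeight_succ_le {N j : ℕ} (hj : 0 < j) (hjN : 2 * (j + 1) ≤ N) :
    ngonWeight N (j + 1) ≤ ngonWeight N j := by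
  have hpos := sin_pi_mul_div_pos hj (by omega : j < N)
  have hN : (0 : ℝ) < N := by exact_mod_cast (by omega : 0 < N)
  have hjN' : 2 * ((j : ℝ) + 1) ≤ N := by exact_mod_cast hjN
  have hle : sin (π * j / N) ≤ sin (π * (j + 1 : ℕ) / N) := by
    apply sin_le_sin_of_le_of_le_pi_div_two
    · have : 0 ≤ π * j / N := by positivity
      linarith [pi_pos]
    · rw [div_le_iff₀ hN]; push_cast; nlinarith [pi_pos]
    · gcongr; linarith
  unfold ngonWeight
  gcongr

theorem ngonWeight_convex {N j : ℕ} (hj : 0 < j) (hjN : j + 2 < N) :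
    2 * ngonWeight N (j + 1) ≤ ngonWeight N j + ngonWeight N (j + 2) := by
  have h := two_mul_inv_sin_sq_midpoint_le (sin_pi_mul_div_pos hj (by omega : j < N))
    (sin_pi_mul_div_pos (by omega : 0 < j + 2) hjN)
  rw [show (π * j / N + π * (j + 2 : ℕ) / N) / 2 = π * (j + 1 : ℕ) / N by push_cast; ring] at h
  simp only [ngonWeight, mul_inv]
  linarith

noncomputable def verticalEigenvalue (N : ℕ) (x : ℝ) : ℝ :=
  -∑ j ∈ Icc 1 (N - 1), (1 - cos (2 * π * j * x / N)) / (2 * sin (π * j / N)) ^ 3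

theorem verticalEigenvalue_neg {N k : ℕ} (hk : 0 < k) (hkN : k < N) :
    verticalEigenvalue N k < 0 := by
  have hN : (0 : ℝ) < N := by exact_mod_cast hk.trans hkN
  have hkN' : (k : ℝ) < N := by exact_mod_cast hkN
  have hk' : (0 : ℝ) < k := by exact_mod_cast hk
  rw [verticalEigenvalue, neg_lt_zero]
  refine sum_pos' (fun j hj => ?_) ⟨1, mem_Icc.2 ⟨le_rfl, by omega⟩, ?_⟩
  · rw [mem_Icc] at hj
    have := sin_pi_mul_div_pos (by omega : 0 < j) (by omega : j < N)
    have := cos_le_one (2 * π * j * k / N)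
    exact div_nonneg (by linarith) (by positivity)
  · have hsin := sin_pi_mul_div_pos one_pos (by omega : 1 < N)
    have hx₀ : 0 < 2 * π * (1 : ℕ) * k / N := by
      rw [Nat.cast_one, mul_one]; exact div_pos (mul_pos two_pi_pos hk') hN
    have hx₁ : 2 * π * (1 : ℕ) * k / N < 2 * π := by
      rw [Nat.cast_one, mul_one, div_lt_iff₀ hN]; nlinarith [pi_pos]
    have hcos : cos (2 * π * (1 : ℕ) * k / N) ≠ 1 := by
      rw [Ne, cos_eq_one_iff_of_lt_of_lt (by linarith) hx₁]
      exact hx₀.ne'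
    exact div_pos (sub_pos.2 (lt_of_le_of_ne (cos_le_one _) hcos)) (by positivity)

theorem verticalEigenvalue_sub_add_one (N : ℕ) (x : ℝ) :
    verticalEigenvalue N x - verticalEigenvalue N (x + 1) =
      ∑ j ∈ Icc 1 (N - 1), ngonWeight N j * sin (j * ((2 * x + 1) * π / N)) := by
  rw [verticalEigenvalue, verticalEigenvalue, neg_sub_neg, ← sum_sub_distrib]
  refine sum_congr rfl fun j hj => ?_
  rw [mem_Icc] at hj
  have hsin := (sin_pi_mul_div_pos (by omega : 0 < j) (by omega : j < N)).ne'
  have hcos : cos (2 * π * j * x / N) - cos (2 * π * j * (x + 1) / N) =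
      2 * sin (j * ((2 * x + 1) * π / N)) * sin (π * j / N) := by
    rw [cos_sub_cos, show (2 * π * j * x / N + 2 * π * j * (x + 1) / N) / 2 =
      j * ((2 * x + 1) * π / N) by ring, show (2 * π * j * x / N - 2 * π * j * (x + 1) / N) / 2 =
      -(π * j / N) by ring, sin_neg]
    ring
  rw [ngonWeight, ← sub_div, sub_sub_sub_cancel_left, hcos]
  field_simp
  ring

theorem odd_mul_pi_div_mem_Ioo {N k : ℕ} (hkN : 2 * k + 1 < N) :
    (2 * k + 1) * π / N ∈ Set.Ioo 0 π := by
  have hN : (0 : ℝ) < N := by exact_mod_cast (by omega : 0 < N)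
  have hkN' : 2 * (k : ℝ) + 1 < N := by exact_mod_cast hkN
  refine ⟨by positivity, ?_⟩
  rw [div_lt_iff₀ hN]
  nlinarith [pi_pos]

theorem sum_Icc_sin_mul_odd_mul_pi_div_pos {N k : ℕ} (hkN : 2 * k + 1 < N) :
    0 < ∑ j ∈ Icc 1 (N - 1), sin (j * ((2 * k + 1) * π / N)) := by
  obtain ⟨hθ₀, hθπ⟩ := odd_mul_pi_div_mem_Ioo hkN
  have hN : (N : ℝ) ≠ 0 := by exact_mod_cast (by omega : N ≠ 0)
  set θ := (2 * (k : ℝ) + 1) * π / N with hθ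
  have hsum := two_mul_sin_half_mul_sum_Icc_sin θ (N - 1)
  rw [Nat.cast_sub (by omega), Nat.cast_one,
    show ((N : ℝ) - 1 + 1 / 2) * θ = (2 * k + 1 : ℕ) * π - θ / 2 by
      rw [hθ]; push_cast; field_simp; ring,
    cos_nat_mul_pi_sub, (odd_two_mul_add_one k).neg_one_pow, neg_one_mul, sub_neg_eq_add] at hsum
  have hsin : 0 < sin (θ / 2) := sin_pos_of_pos_of_lt_pi (by linarith) (by linarith)
  have hcos : 0 < cos (θ / 2) := cos_pos_of_mem_Ioo ⟨by linarith, by linarith⟩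
  refine pos_of_mul_pos_right ?_ (by positivity : 0 ≤ 2 * sin (θ / 2))
  rw [hsum]
  positivity

theorem sum_ngonWeight_mul_sin_pos {N k : ℕ} (hkN : 2 * k + 1 < N) :
    0 < ∑ j ∈ Icc 1 (N - 1), ngonWeight N j * sin (j * ((2 * k + 1) * π / N)) := by
  obtain ⟨hθ₀, hθπ⟩ := odd_mul_pi_div_mem_Ioo hkN
  have hN : (N : ℝ) ≠ 0 := by exact_mod_cast (by omega : N ≠ 0)
  set θ := (2 * (k : ℝ) + 1) * π / N with hθ
  set h := N / 2
  have hsin_sub (j : ℕ) (hj : j ≤ N) : sin ((N - j : ℕ) * θ) = sin (j * θ) := by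
    rw [Nat.cast_sub hj, show ((N : ℝ) - j) * θ = (2 * k + 1 : ℕ) * π - j * θ by
      rw [hθ]; push_cast; field_simp, sin_nat_mul_pi_sub,
      (odd_two_mul_add_one k).neg_one_pow, neg_one_mul, neg_neg]
  have hrest : 0 ≤ ∑ j ∈ Icc 1 (N - 1), (ngonWeight N j - ngonWeight N h) * sin (j * θ) := by
    rw [sum_Icc_eq_two_mul_sum_Icc_half _ N
      (fun j hj => by rw [mem_Icc] at hj; rw [ngonWeight_sub (by omega), hsin_sub j (by omega)])
      (by rw [sub_self, zero_mul])]
    have hfejer := mul_sum_Icc_sin_le_sum_Icc_mul_sin hθ₀ hθπ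
      (a := fun j => ngonWeight N j - ngonWeight N h) (n := h)
      (fun j hj hjh => by linarith [ngonWeight_convex (N := N) hj (by omega)])
      (fun j hj hjh => by linarith [ngonWeight_succ_le (N := N) hj (by omega)])
    rw [sub_self, zero_mul] at hfejer
    positivity
  calc 0 < ngonWeight N h * ∑ j ∈ Icc 1 (N - 1), sin (j * θ) :=
        mul_pos (ngonWeight_pos (by omega) (by omega)) (sum_Icc_sin_mul_odd_mul_pi_div_pos hkN)
    _ ≤ ngonWeight N h * ∑ j ∈ Icc 1 (N - 1), sin (j * θ) +
        ∑ j ∈ Icc 1 (N - 1), (ngonWeight N j - ngonWeight N h) * sin (j * θ) :=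
      le_add_of_nonneg_right hrest
    _ = ∑ j ∈ Icc 1 (N - 1), ngonWeight N j * sin (j * θ) := by
      rw [mul_sum, ← sum_add_distrib]
      exact sum_congr rfl fun j _ => by ring

theorem ngon_eigenvalues_neg_decreasing_general (N : ℕ) :
    (∀ k : ℕ, 1 ≤ k → k ≤ N / 2 →
      (-∑ j ∈ Finset.Icc 1 (N - 1),
          (1 - Real.cos (2 * Real.pi * j * k / N)) / (2 * Real.sin (Real.pi * j / N)) ^ 3) < 0) ∧
    (∀ k : ℕ, 1 ≤ k → k + 1 ≤ N / 2 →
      (-∑ j ∈ Finset.Icc 1 (N - 1),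
          (1 - Real.cos (2 * Real.pi * j * (k + 1) / N)) / (2 * Real.sin (Real.pi * j / N)) ^ 3)
        < (-∑ j ∈ Finset.Icc 1 (N - 1),
            (1 - Real.cos (2 * Real.pi * j * k / N)) / (2 * Real.sin (Real.pi * j / N)) ^ 3)) := by
  refine ⟨fun k hk hkN => verticalEigenvalue_neg hk (by omega), fun k _ hkN => ?_⟩
  have hpos := sum_ngonWeight_mul_sin_pos (N := N) (k := k) (by omega)
  rw [← verticalEigenvalue_sub_add_one] at hpos
  exact sub_pos.1 hpos

/-- For `N ≥ 3`, the half sequence `(λ_k)_{1 ≤ k ≤ ⌊N/2⌋}` of vertical eigenvalues of the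
regular N-gon, `λ_k = -∑_{j=1}^{N-1} (1 - cos(2πjk/N))/(2 sin(πj/N))^3`, is negative and
strictly decreasing. -/
theorem ngon_eigenvalues_neg_decreasing (N : ℕ) (hN : 3 ≤ N) :
    (∀ k : ℕ, 1 ≤ k → k ≤ N / 2 →
      (-∑ j ∈ Finset.Icc 1 (N - 1),
          (1 - Real.cos (2 * Real.pi * j * k / N)) / (2 * Real.sin (Real.pi * j / N)) ^ 3) < 0) ∧
    (∀ k : ℕ, 1 ≤ k → k + 1 ≤ N / 2 →
      (-∑ j ∈ Finset.Icc 1 (N - 1),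
          (1 - Real.cos (2 * Real.pi * j * (k + 1) / N)) / (2 * Real.sin (Real.pi * j / N)) ^ 3)
        < (-∑ j ∈ Finset.Icc 1 (N - 1),
            (1 - Real.cos (2 * Real.pi * j * k / N)) / (2 * Real.sin (Real.pi * j / N)) ^ 3)) :=
  ngon_eigenvalues_neg_decreasing_general N
end

section
/- Let N = 2n+1 with θ = 2π/N and define δλ_k = -(1/2) ∑_{j=1}^n sin(j(2k+1)θ/2) / sin²(jθ/2). Then δλ_0 < 0 and δλ_n = 0. -/
open Finset Real

/-! The angle `j θ / 2 = j π / N` lies in `(0, π)` for `1 ≤ j ≤ n`, so every summand of `δλ_0`,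
which is `1 / sin (j θ / 2)`, is positive; for `k = n` the numerators are `sin (j π) = 0`. -/

lemma sin_mul_two_pi_div_div_two_pos {x N : ℝ} (hx : 0 < x) (hxN : x < N) :
    0 < sin (x * (2 * π / N) / 2) := by
  have hN : 0 < N := hx.trans hxN
  have harg : x * (2 * π / N) / 2 = x / N * π := by field_simp
  rw [harg]
  apply sin_pos_of_pos_of_lt_pi (by positivity)
  nlinarith [pi_pos, (div_lt_one hN).2 hxN]

lemma sin_natCast_mul_mul_two_pi_div_div_two (j : ℕ) {N : ℝ} (hN : N ≠ 0) :
    sin (j * N * (2 * π / N) / 2) = 0 := by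
  rw [show (j : ℝ) * N * (2 * π / N) / 2 = j * π by field_simp, sin_nat_mul_pi]

/-- For `N = 2n+1`, `θ = 2π/N` and
`δλ_k = -(1/2) ∑_{j=1}^n sin(j(2k+1)θ/2)/sin²(jθ/2)`, one has `δλ_0 < 0` and `δλ_n = 0`. -/
theorem ngon_first_difference_endpoints (n : ℕ) (hn : 1 ≤ n) :
    (-(1 / 2) * ∑ j ∈ Finset.Icc 1 n,
        Real.sin (j * (2 * (0 : ℕ) + 1) * (2 * Real.pi / (2 * n + 1)) / 2) /
          (Real.sin (j * (2 * Real.pi / (2 * n + 1)) / 2)) ^ 2) < 0 ∧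
    (-(1 / 2) * ∑ j ∈ Finset.Icc 1 n,
        Real.sin (j * (2 * (n : ℝ) + 1) * (2 * Real.pi / (2 * n + 1)) / 2) /
          (Real.sin (j * (2 * Real.pi / (2 * n + 1)) / 2)) ^ 2) = 0 := by
  constructor
  · have hsum : 0 < ∑ j ∈ Icc 1 n,
        sin (j * (2 * (0 : ℕ) + 1) * (2 * π / (2 * n + 1)) / 2) /
          (sin (j * (2 * π / (2 * n + 1)) / 2)) ^ 2 := by
      refine sum_pos (fun j hj => ?_) ⟨1, mem_Icc.2 ⟨le_rfl, hn⟩⟩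
      obtain ⟨hj1, hjn⟩ := mem_Icc.1 hj
      have hsin := sin_mul_two_pi_div_div_two_pos (x := j) (N := 2 * n + 1)
        (by exact_mod_cast hj1) (by norm_cast; omega)
      push_cast
      rw [mul_zero, zero_add, mul_one]
      positivity
    linarith
  · rw [sum_eq_zero fun j _ => by
      rw [sin_natCast_mul_mul_two_pi_div_div_two j (by positivity), zero_div], mul_zero]
end

section
/- Let N = 2n+1, θ = 2π/N, and for 0 ≤ k ≤ n-2 define δ³λ_k = 2 ∑_{j=1}^n sin(j(2k+3)θ/2). Then δ³λ_k = 2 sin((2k+3)(n+1)θ/4) sin((2k+3)nθ/4) / sin((2k+3)θ/4), and δ³λ_k ≥ 0 for all 0 ≤ k ≤ n-2. -/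
open Finset

/-! With `t = (2k+3)θ/4` every angle in the statement is a multiple of `t`, and the sum is
`∑_{j=1}^n sin(2jt)`. Multiplying by `2 sin t` makes it telescope to `cos t - cos((2n+1)t)`,
which is also `2 sin((n+1)t) sin(nt)`; this gives the closed form. Since
`(2n+1)t = (2k+3)π/2`, the term `cos((2n+1)t)` vanishes, so the sum equals
`cos t / (2 sin t)`, which is nonnegative because `0 < t < π/2` when `k ≤ n-2`. -/

namespace Real

theorem two_mul_sin_mul_sum_sin_two_mul (t : ℝ) (n : ℕ) :
    2 * sin t * ∑ j ∈ Icc 1 n, sin (2 * j * t) = cos t - cos ((2 * n + 1) * t) := by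
  induction n with
  | zero => simp
  | succ n ih =>
    rw [sum_Icc_succ_top (by omega), mul_add, ih, two_mul_sin_mul_sin, ← cos_neg (t - _)]
    push_cast
    ring_nf

theorem two_mul_sin_mul_sin_eq_cos_sub_cos (x t : ℝ) :
    2 * sin ((x + 1) * t) * sin (x * t) = cos t - cos ((2 * x + 1) * t) := by
  rw [two_mul_sin_mul_sin]
  ring_nf

theorem sum_sin_two_mul_eq_div {t : ℝ} (ht : sin t ≠ 0) (n : ℕ) :
    ∑ j ∈ Icc 1 n, sin (2 * j * t) = sin ((n + 1) * t) * sin (n * t) / sin t := by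
  rw [eq_div_iff ht]
  linear_combination (two_mul_sin_mul_sum_sin_two_mul t n
    - two_mul_sin_mul_sin_eq_cos_sub_cos n t) / 2

theorem sum_sin_two_mul_nonneg {t : ℝ} {n : ℕ} (ht₀ : 0 < t) (ht : t ≤ π / 2)
    (hcos : cos ((2 * n + 1) * t) = 0) : 0 ≤ ∑ j ∈ Icc 1 n, sin (2 * j * t) := by
  have hsin : 0 < 2 * sin t := by
    have := sin_pos_of_pos_of_lt_pi ht₀ (by linarith [pi_pos])
    positivity
  have hcos_t : 0 ≤ cos t := cos_nonneg_of_mem_Icc ⟨by linarith, ht⟩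
  have h := two_mul_sin_mul_sum_sin_two_mul t n
  rw [hcos, sub_zero] at h
  exact nonneg_of_mul_nonneg_right (h ▸ hcos_t) hsin

end Real

/-- For `N = 2n+1`, `θ = 2π/N` and `δ³λ_k = 2 ∑_{j=1}^n sin(j(2k+3)θ/2)`, one has the
closed form `δ³λ_k = 2 sin((2k+3)(n+1)θ/4) sin((2k+3)nθ/4) / sin((2k+3)θ/4)` and
`δ³λ_k ≥ 0` for all `0 ≤ k ≤ n-2`. -/
theorem ngon_third_difference (n : ℕ) (hn : 3 ≤ n) :
    ∀ k : ℕ, k ≤ n - 2 →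
      (2 * ∑ j ∈ Finset.Icc 1 n,
          Real.sin (j * (2 * k + 3) * (2 * Real.pi / (2 * n + 1)) / 2))
        = 2 * (Real.sin ((2 * k + 3) * (n + 1) * (2 * Real.pi / (2 * n + 1)) / 4) *
            Real.sin ((2 * k + 3) * n * (2 * Real.pi / (2 * n + 1)) / 4)) /
            Real.sin ((2 * k + 3) * (2 * Real.pi / (2 * n + 1)) / 4) ∧
      0 ≤ 2 * ∑ j ∈ Finset.Icc 1 n,
          Real.sin (j * (2 * k + 3) * (2 * Real.pi / (2 * n + 1)) / 2) := by
  intro k hk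
  set t := (2 * k + 3) * (2 * Real.pi / (2 * n + 1)) / 4 with ht
  have hN : (0 : ℝ) < 2 * n + 1 := by positivity
  have ht₀ : 0 < t := by positivity
  have ht_lt : t < Real.pi / 2 := by
    have hk' : (2 * k + 3 : ℝ) < 2 * n + 1 := by exact_mod_cast (by omega : 2 * k + 3 < 2 * n + 1)
    rw [show t = (2 * k + 3) / (2 * n + 1) * (Real.pi / 2) by rw [ht]; ring]
    exact mul_lt_of_lt_one_left (by positivity) ((div_lt_one hN).mpr hk')
  have hcos : Real.cos ((2 * n + 1) * t) = 0 := by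
    rw [Real.cos_eq_zero_iff]
    exact ⟨k + 1, by rw [ht]; push_cast; field_simp; ring⟩
  have hsum : ∑ j ∈ Icc 1 n, Real.sin (j * (2 * k + 3) * (2 * Real.pi / (2 * n + 1)) / 2)
      = ∑ j ∈ Icc 1 n, Real.sin (2 * j * t) :=
    sum_congr rfl fun j _ => congrArg Real.sin (by rw [ht]; ring)
  rw [hsum, show (2 * k + 3) * (n + 1) * (2 * Real.pi / (2 * n + 1)) / 4 = (n + 1) * t by ring,
    show (2 * k + 3) * n * (2 * Real.pi / (2 * n + 1)) / 4 = n * t by ring]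
  have hsin : Real.sin t ≠ 0 :=
    (Real.sin_pos_of_pos_of_lt_pi ht₀ (ht_lt.trans (by linarith [Real.pi_pos]))).ne'
  exact ⟨by rw [Real.sum_sin_two_mul_eq_div hsin]; ring,
    mul_nonneg zero_le_two (Real.sum_sin_two_mul_nonneg ht₀ ht_lt.le hcos)⟩
end

section
/- For every integer n ≥ 2, the sum a_n = ∑_{j=1}^{n-1} (-1)^j / sin²(jπ/(2n)) + (-1)^n/2 is ≤ -1/2; in particular a_n < 0. -/
/-!
The terms `1 / sin² (jπ/(2n))` decrease for `1 ≤ j ≤ n`, and the `j = n` term equals `1`.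
Appending it turns `a_n` into `∑_{j=1}^{n} (-1)^j / sin² (jπ/(2n)) - (-1)^n/2`, and an
alternating sum of a decreasing sequence is at most `0` (even length) or its last term `-1`
(odd length).
-/

open Finset Real

/-- Pair consecutive terms; the factor `((-1) ^ m - 1) / 2` is `0` for even `m` and `-1` for
odd `m`. -/
theorem sum_Icc_neg_one_pow_mul_le_of_antitoneOn (f : ℕ → ℝ) (m : ℕ)
    (hf : AntitoneOn f (Set.Icc 1 m)) :
    ∑ j ∈ Icc 1 m, (-1 : ℝ) ^ j * f j ≤ ((-1) ^ m - 1) / 2 * f m := by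
  induction m with
  | zero => simp
  | succ m ih =>
    have ih := ih (hf.mono (Set.Icc_subset_Icc_right m.le_succ))
    rw [sum_Icc_succ_top (by omega), pow_succ]
    rcases m.even_or_odd with hm | hm
    · rw [hm.neg_one_pow] at ih ⊢
      linarith
    · have hdec : f (m + 1) ≤ f m := hf ⟨hm.pos, m.le_succ⟩ ⟨by omega, le_rfl⟩ m.le_succ
      rw [hm.neg_one_pow] at ih ⊢
      linarith

theorem antitoneOn_inv_sin_sq : AntitoneOn (fun x => (sin x ^ 2)⁻¹) (Set.Ioc 0 (π / 2)) := by
  intro x hx y hy hxy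
  have hsin_pos : 0 < sin x := sin_pos_of_pos_of_lt_pi hx.1 (by linarith [hx.2, pi_pos])
  have hsin_le : sin x ≤ sin y :=
    strictMonoOn_sin.monotoneOn ⟨by linarith [hx.1, pi_pos], hx.2⟩
      ⟨by linarith [hy.1, pi_pos], hy.2⟩ hxy
  exact inv_anti₀ (by positivity) (pow_le_pow_left₀ hsin_pos.le hsin_le 2)

/-- For every integer `n ≥ 2`, the sum
`a_n = ∑_{j=1}^{n-1} (-1)^j / sin²(jπ/(2n)) + (-1)^n/2` is `≤ -1/2`; in particular `a_n < 0`. -/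
theorem even_case_boundary_sum_neg (n : ℕ) (hn : 2 ≤ n) :
    ((∑ j ∈ Finset.Icc 1 (n - 1), (-1 : ℝ) ^ j / (Real.sin (j * Real.pi / (2 * n))) ^ 2)
        + (-1 : ℝ) ^ n / 2) ≤ -(1 / 2) ∧
    ((∑ j ∈ Finset.Icc 1 (n - 1), (-1 : ℝ) ^ j / (Real.sin (j * Real.pi / (2 * n))) ^ 2)
        + (-1 : ℝ) ^ n / 2) < 0 := by
  set f : ℕ → ℝ := fun j => (sin (j * π / (2 * n)) ^ 2)⁻¹
  have hf : AntitoneOn f (Set.Icc 1 n) := by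
    refine antitoneOn_inv_sin_sq.comp_MonotoneOn (fun i _ j _ hij => ?_) (fun j hj => ⟨?_, ?_⟩)
    · gcongr
    · have : (1 : ℝ) ≤ j := by exact_mod_cast hj.1
      positivity
    · have : (j : ℝ) ≤ n := by exact_mod_cast hj.2
      rw [div_le_div_iff₀ (by positivity) two_pos]
      nlinarith [pi_pos]
  have hfn : f n = 1 := by
    have hangle : (n : ℝ) * π / (2 * n) = π / 2 := by field_simp
    simp only [f, hangle, sin_pi_div_two, one_pow, inv_one]
  have hsplit : ∑ j ∈ Icc 1 (n - 1), (-1 : ℝ) ^ j / sin (j * π / (2 * n)) ^ 2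
      = ∑ j ∈ Icc 1 n, (-1 : ℝ) ^ j * f j - (-1) ^ n := by
    obtain ⟨m, rfl⟩ : ∃ m, n = m + 1 := ⟨n - 1, by omega⟩
    rw [sum_Icc_succ_top (by omega), hfn, Nat.add_sub_cancel]
    simp only [f, div_eq_mul_inv]
    ring
  have hbound := sum_Icc_neg_one_pow_mul_le_of_antitoneOn f n hf
  rw [hfn] at hbound
  constructor <;> linarith
end

section
/- For n ≥ 1, k an integer with 1 ≤ k ≤ n-2, and α = (k + 3/2)π/(2n), the quantity ν_k = 2 sin((n+1)α) sin(nα) + (-1)^k sin α is nonnegative. Indeed ν_k = cos α · ((1 + cos 2nα) + tan α · (sin 2nα + (-1)^k)) and sin(2nα) = -(-1)^k. -/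
/-- For `n ≥ 1`, `1 ≤ k ≤ n-2` and `α = (k + 3/2)π/(2n)`, the quantity
`ν_k = 2 sin((n+1)α) sin(nα) + (-1)^k sin α` is nonnegative; indeed
`ν_k = cos α · ((1 + cos 2nα) + tan α · (sin 2nα + (-1)^k))` and `sin(2nα) = -(-1)^k`. -/
theorem even_case_third_difference_numerator (n k : ℕ) (hn : 1 ≤ n)
    (hk1 : 1 ≤ k) (hk2 : k ≤ n - 2) :
    (2 * Real.sin (((n : ℝ) + 1) * (((k : ℝ) + 3 / 2) * Real.pi / (2 * n))) *
        Real.sin ((n : ℝ) * (((k : ℝ) + 3 / 2) * Real.pi / (2 * n))) +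
        (-1 : ℝ) ^ k * Real.sin (((k : ℝ) + 3 / 2) * Real.pi / (2 * n)))
      = Real.cos (((k : ℝ) + 3 / 2) * Real.pi / (2 * n)) *
          ((1 + Real.cos (2 * (n : ℝ) * (((k : ℝ) + 3 / 2) * Real.pi / (2 * n)))) +
            Real.tan (((k : ℝ) + 3 / 2) * Real.pi / (2 * n)) *
              (Real.sin (2 * (n : ℝ) * (((k : ℝ) + 3 / 2) * Real.pi / (2 * n))) + (-1 : ℝ) ^ k)) ∧
    Real.sin (2 * (n : ℝ) * (((k : ℝ) + 3 / 2) * Real.pi / (2 * n))) = -(-1 : ℝ) ^ k ∧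
    0 ≤ 2 * Real.sin (((n : ℝ) + 1) * (((k : ℝ) + 3 / 2) * Real.pi / (2 * n))) *
          Real.sin ((n : ℝ) * (((k : ℝ) + 3 / 2) * Real.pi / (2 * n))) +
        (-1 : ℝ) ^ k * Real.sin (((k : ℝ) + 3 / 2) * Real.pi / (2 * n)) := by
  have hn3 : 3 ≤ n := by omega
  have hnR : (0:ℝ) < n := by positivity
  have hpi := Real.pi_pos
  set θ : ℝ := ((k : ℝ) + 3 / 2) * Real.pi / (2 * n) with hθdef
  -- value of 2nθ
  have h2nθ : 2 * (n : ℝ) * θ = (k : ℝ) * Real.pi + (Real.pi + Real.pi / 2) := by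
    rw [hθdef]; field_simp; ring
  have hsinkpi : Real.sin ((k : ℝ) * Real.pi) = 0 := Real.sin_nat_mul_pi k
  have hcoskpi : Real.cos ((k : ℝ) * Real.pi) = (-1 : ℝ) ^ k := by
    have := Real.cos_nat_mul_pi_sub 0 k
    simpa using this
  have hsin32 : Real.sin (Real.pi + Real.pi / 2) = -1 := by
    rw [Real.sin_add]; simp
  have hcos32 : Real.cos (Real.pi + Real.pi / 2) = 0 := by
    rw [Real.cos_add]; simp
  have hsin2 : Real.sin (2 * (n : ℝ) * θ) = -(-1 : ℝ) ^ k := by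
    rw [h2nθ, Real.sin_add, hsinkpi, hcoskpi, hsin32, hcos32]; ring
  have hcos2 : Real.cos (2 * (n : ℝ) * θ) = 0 := by
    rw [h2nθ, Real.cos_add, hsinkpi, hcoskpi, hsin32, hcos32]; ring
  -- abbreviations
  set s : ℝ := Real.sin ((n : ℝ) * θ) with hs
  set c : ℝ := Real.cos ((n : ℝ) * θ) with hc
  have hdouble : 2 * (n : ℝ) * θ = 2 * ((n : ℝ) * θ) := by ring
  have h2sc : 2 * s * c = -(-1 : ℝ) ^ k := by
    rw [← hsin2, hdouble, Real.sin_two_mul]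
  have hcs : 2 * c ^ 2 - 1 = 0 := by
    rw [← hcos2, hdouble, Real.cos_two_mul]
  have hsq : s ^ 2 + c ^ 2 = 1 := by
    rw [hs, hc]; exact Real.sin_sq_add_cos_sq _
  have hs2 : 2 * s ^ 2 = 1 := by nlinarith
  have hsinadd : Real.sin (((n : ℝ) + 1) * θ) = s * Real.cos θ + c * Real.sin θ := by
    have : ((n : ℝ) + 1) * θ = (n : ℝ) * θ + θ := by ring
    rw [this, Real.sin_add]
  -- the main value computation
  have hval : 2 * Real.sin (((n : ℝ) + 1) * θ) * s + (-1 : ℝ) ^ k * Real.sin θ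
      = Real.cos θ := by
    rw [hsinadd]; linear_combination Real.cos θ * hs2 + Real.sin θ * h2sc
  have hrhs : Real.cos θ *
      ((1 + Real.cos (2 * (n : ℝ) * θ)) +
        Real.tan θ * (Real.sin (2 * (n : ℝ) * θ) + (-1 : ℝ) ^ k)) = Real.cos θ := by
    rw [hsin2, hcos2]; ring
  have hθnonneg : (0:ℝ) ≤ θ := by positivity
  have hθle : θ ≤ Real.pi / 2 := by
    rw [hθdef, div_le_iff₀ (by positivity)]
    have hkle : (k : ℝ) ≤ (n : ℝ) - 2 := by
      have : (k : ℝ) + 2 ≤ (n : ℝ) := by exact_mod_cast (by omega : k + 2 ≤ n)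
      linarith
    nlinarith
  have hcosθ : 0 ≤ Real.cos θ :=
    Real.cos_nonneg_of_mem_Icc ⟨by linarith [Real.pi_pos], hθle⟩
  refine ⟨by rw [hrhs, hval], hsin2, ?_⟩
  rw [hval]; exact hcosθ
end

section
/- Fix integers N ≥ 3, k ∈ {1,…,⌊N/2⌋}, η = ±1. The eigenmode S_{r/s}(N,k,η) is a simple choreography if and only if s - kηr ≡ 0 (mod N) (with gcd(r,s)=1). Formally: there exist δ ∈ ℤ/Nℤ with gcd(δ,N)=1, θ ∈ ℝ/sℤ, and integers l, m solving sδ - Nrθ = lsN and kηδ - Nθ = mN, if and only if N divides s - kηr. -/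
/-- The eigenmode `S_{r/s}(N,k,η)` is a simple choreography iff `s - kηr ≡ 0 (mod N)`:
there exist `δ` with `gcd(δ,N)=1`, `θ ∈ ℝ`, and integers `l, m` solving
`sδ - Nrθ = lsN` and `kηδ - Nθ = mN`, if and only if `N ∣ s - kηr`. -/
theorem simple_choreography_criterion (N k : ℕ) (hN : 3 ≤ N) (hk1 : 1 ≤ k) (hk2 : k ≤ N / 2)
    (η : ℤ) (hη : η = 1 ∨ η = -1) (r : ℤ) (s : ℕ) (hs : 1 ≤ s)
    (hrs : IsCoprime r (s : ℤ)) :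
    (∃ δ : ℤ, Int.gcd δ N = 1 ∧ ∃ θ : ℝ, ∃ l m : ℤ,
        (s : ℝ) * δ - N * r * θ = l * s * N ∧
        (k : ℝ) * η * δ - N * θ = m * N)
      ↔ (N : ℤ) ∣ ((s : ℤ) - k * η * r) := by
  have hN0 : (0:ℝ) < N := by positivity
  have hNne : (N:ℝ) ≠ 0 := ne_of_gt hN0
  constructor
  · rintro ⟨δ, hδ, θ, l, m, h1, h2⟩
    have hθ : (N:ℝ) * θ = (k:ℝ) * η * δ - m * N := by linarith
    have h1' : (s:ℝ) * δ - r * ((k:ℝ) * η * δ - m * N) = l * s * N := by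
      have heq : (N:ℝ) * r * θ = r * ((N:ℝ) * θ) := by ring
      rw [heq, hθ] at h1
      exact h1
    have hz : (s:ℤ) * δ - r * ((k:ℤ) * η * δ - m * N) = l * s * N := by
      exact_mod_cast h1'
    have hdvd : (N:ℤ) ∣ δ * ((s:ℤ) - k * η * r) := ⟨l * s - r * m, by linarith [hz]⟩
    have hcop : IsCoprime (N:ℤ) δ := (Int.isCoprime_iff_gcd_eq_one.mpr hδ).symm
    exact hcop.dvd_of_dvd_mul_left hdvd
  · rintro ⟨t, ht⟩
    obtain ⟨a, b, hab⟩ := hrs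
    refine ⟨1, by simp, ((k*η - (-(t*a))*N : ℤ) : ℝ) / N, t * b, -(t * a), ?_, ?_⟩
    · have key : (s:ℤ) * 1 - r * ((k:ℤ)*η - (-(t*a))*N) = (t*b) * s * N := by
        linear_combination ht - N * t * hab
      have heq : (N:ℝ) * r * (((k*η - (-(t*a))*N : ℤ) : ℝ) / N) =
          r * ((k*η - (-(t*a))*N : ℤ) : ℝ) := by
        field_simp
      rw [heq]
      exact_mod_cast key
    · have heq : (N:ℝ) * (((k*η - (-(t*a))*N : ℤ) : ℝ) / N) =
          ((k*η - (-(t*a))*N : ℤ) : ℝ) := by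
        field_simp
      rw [heq]
      push_cast
      ring
end

section
/- Let N = 2n+1 ≥ 3. Then with k = 1, η = -1, r = N-1 and k' = n, η' = -1, r' = 2, the isomorphism conditions hold: r - r' = 2p with p = n-1, and -kη + k'η' - 2p kη k'η' = 1 - n - 2(n-1)n ≡ 0 (mod N); the relabelling is Σ(j) = (2n-1)j ≡ -2j (mod N). In other words, the symmetry groups G_{N-1}(N,1,-1) of the maximal chain and G_2(N,n,-1) of the N-body Eight have isomorphic actions. -/
/-- For `N = 2n+1`, the symmetry groups `G_{N-1}(N,1,-1)` (maximal chain) and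
`G_2(N,n,-1)` (N-body Eight) satisfy the isomorphism conditions: with `p = n-1`,
`(N-1) - 2 = 2p`, `-kη + k'η' - 2p·kη·k'η' = 1 - n - 2(n-1)n ≡ 0 (mod N)`, and the
relabelling is `Σ(j) = (1 - 2p·kη)j = (2n-1)j ≡ -2j (mod N)`. -/
theorem maximal_chain_eight_isomorphism (n : ℕ) (hn : 1 ≤ n) :
    (((2 * n + 1 : ℤ)) - 1) - 2 = 2 * ((n : ℤ) - 1) ∧
    ((2 * n + 1 : ℤ)) ∣
      (-(1 : ℤ) * (-1) + (n : ℤ) * (-1) -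
        2 * ((n : ℤ) - 1) * ((1 : ℤ) * (-1)) * ((n : ℤ) * (-1))) ∧
    (∀ j : ZMod (2 * n + 1),
      ((1 - 2 * ((n : ℤ) - 1) * ((1 : ℤ) * (-1)) : ℤ) : ZMod (2 * n + 1)) * j
        = ((2 * (n : ℤ) - 1 : ℤ) : ZMod (2 * n + 1)) * j) ∧
    ((2 * (n : ℤ) - 1 : ℤ) : ZMod (2 * n + 1)) = ((-2 : ℤ) : ZMod (2 * n + 1)) := by
  have h : ((2 * n + 1 : ℤ) : ZMod (2 * n + 1)) = 0 := by
    exact_mod_cast (ZMod.natCast_self (2 * n + 1))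
  push_cast at h
  refine ⟨by ring, ⟨1 - (n : ℤ), by ring⟩, ?_, ?_⟩
  · intro j; push_cast; ring
  · push_cast
    linear_combination h
end
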